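/- arXiv:1803.10173 — 2 statements merged into one kernel-verified Lean document; each statement's English description precedes it below -/
import Mathlib

section
/- Let φ: ℝⁿ → ℝ be twice continuously differentiable with μI ⪯ ∇²φ(x) ⪯ LI for all x, where 0 < μ ≤ L, and let φ⋆ be its minimum value. Suppose g_k = ∇φ(x_k) + e(x_k) with ‖e(x)‖ ≤ ε̄_g for all x. If x_{k+1} = x_k − α g_k with 0 < α ≤ 1/L, then φ(x_{k+1}) − (φ⋆ + ε̄_g²/(2μ)) ≤ (1 − αμ)(φ(x_k) − (φ⋆ + ε̄_g²/(2μ))). -/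
/-!
Taylor's theorem with Lagrange remainder turns the Hessian bounds `μ I ⪯ ∇²φ ⪯ L I` into
quadratic lower and upper models of `φ`. Minimizing the lower model gives the
Polyak–Łojasiewicz inequality `2μ (φ x - φ y) ≤ ‖∇φ x‖²` for every `y`; the upper model with
`α L ≤ 1` shows that a step along the perturbed gradient `∇φ x + ε` decreases `φ` by at least
`α/2 ‖∇φ x‖² - α/2 ‖ε‖²`. Combining the two contracts the gap above `φ y + ε̄²/(2μ)` by the
factor `1 - αμ`.
-/

open Set

section Taylor

variable {E : Type*} [NormedAddCommGroup E] [NormedSpace ℝ E]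

theorem iteratedDeriv_comp_add_smul {f : E → ℝ} {m : ℕ} (hf : ContDiff ℝ m f) (x v : E) (t : ℝ) :
    iteratedDeriv m (fun s : ℝ => f (x + s • v)) t =
      iteratedFDeriv ℝ m f (x + t • v) fun _ => v := by
  have hshift : ContDiff ℝ m fun z => f (x + z) := hf.comp (contDiff_const.add contDiff_id)
  have hcomp : (fun s : ℝ => f (x + s • v)) =
      (fun z => f (x + z)) ∘ ContinuousLinearMap.smulRight (1 : ℝ →L[ℝ] ℝ) v := by
    ext s; simp
  rw [hcomp, iteratedDeriv_eq_iteratedFDeriv,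
    ContinuousLinearMap.iteratedFDeriv_comp_right _ hshift _ le_rfl, iteratedFDeriv_comp_add_left]
  simp

theorem exists_eq_add_fderiv_add_iteratedFDeriv_two {f : E → ℝ} (hf : ContDiff ℝ 2 f) (x v : E) :
    ∃ z, f (x + v) = f x + fderiv ℝ f x v + iteratedFDeriv ℝ 2 f z ![v, v] / 2 := by
  set ψ : ℝ → ℝ := fun t => f (x + t • v)
  have hψ : ContDiff ℝ 2 ψ := hf.comp (contDiff_const.add (contDiff_id.smul contDiff_const))
  obtain ⟨c, -, hc⟩ := taylor_mean_remainder_lagrange_iteratedDeriv (n := 1) zero_ne_one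
    hψ.contDiffOn
  have hderiv : derivWithin ψ (Icc 0 1) 0 = fderiv ℝ f x v := by
    rw [(hψ.differentiable two_ne_zero 0).derivWithin (uniqueDiffOn_Icc zero_lt_one 0 (by simp)),
      ← iteratedDeriv_one, iteratedDeriv_comp_add_smul (hf.of_le one_le_two)]
    simp
  have htaylor : taylorWithinEval ψ 1 (uIcc 0 1) 0 1 = f x + fderiv ℝ f x v := by
    simp [taylorWithinEval_succ, hderiv, ψ]
  have hrem : iteratedDeriv 2 ψ c = iteratedFDeriv ℝ 2 f (x + c • v) ![v, v] := by
    rw [iteratedDeriv_comp_add_smul (m := 2) hf]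
    congr with i
    fin_cases i <;> rfl
  have hend : ψ 1 = f (x + v) := by simp [ψ]
  rw [hend, htaylor, hrem, sub_zero, one_pow, mul_one, Nat.factorial_two, Nat.cast_ofNat] at hc
  exact ⟨x + c • v, by linarith⟩

theorem le_add_fderiv_add_of_iteratedFDeriv_two_le {f : E → ℝ} (hf : ContDiff ℝ 2 f) {L : ℝ}
    (hL : ∀ x v, iteratedFDeriv ℝ 2 f x ![v, v] ≤ L * ‖v‖ ^ 2) (x v : E) :
    f (x + v) ≤ f x + fderiv ℝ f x v + L / 2 * ‖v‖ ^ 2 := by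
  obtain ⟨z, hz⟩ := exists_eq_add_fderiv_add_iteratedFDeriv_two hf x v
  linarith [hL z v]

theorem add_fderiv_add_le_of_le_iteratedFDeriv_two {f : E → ℝ} (hf : ContDiff ℝ 2 f) {μ : ℝ}
    (hμ : ∀ x v, μ * ‖v‖ ^ 2 ≤ iteratedFDeriv ℝ 2 f x ![v, v]) (x v : E) :
    f x + fderiv ℝ f x v + μ / 2 * ‖v‖ ^ 2 ≤ f (x + v) := by
  obtain ⟨z, hz⟩ := exists_eq_add_fderiv_add_iteratedFDeriv_two hf x v
  linarith [hμ z v]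

end Taylor

section Gradient

open scoped Gradient RealInnerProductSpace

variable {F : Type*} [NormedAddCommGroup F] [InnerProductSpace ℝ F] [CompleteSpace F]
  {f : F → ℝ}

theorem two_mul_sub_le_norm_gradient_sq (hf : ContDiff ℝ 2 f) {μ : ℝ} (hμ : 0 ≤ μ)
    (hlow : ∀ x v, μ * ‖v‖ ^ 2 ≤ iteratedFDeriv ℝ 2 f x ![v, v]) (x y : F) :
    2 * μ * (f x - f y) ≤ ‖∇ f x‖ ^ 2 := by
  set v := y - x
  have hquad := add_fderiv_add_le_of_le_iteratedFDeriv_two hf hlow x v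
  rw [add_sub_cancel, ← inner_gradient_left] at hquad
  have hsq : 0 ≤ ‖∇ f x‖ ^ 2 + 2 * μ * ⟪∇ f x, v⟫ + μ ^ 2 * ‖v‖ ^ 2 := by
    have := norm_add_sq_real (∇ f x) (μ • v)
    rw [inner_smul_right, norm_smul, Real.norm_of_nonneg hμ] at this
    nlinarith [sq_nonneg ‖∇ f x + μ • v‖]
  nlinarith

theorem le_sub_add_of_inexact_gradient_step (hf : ContDiff ℝ 2 f) {L α : ℝ} (hα : 0 ≤ α)
    (hαL : α * L ≤ 1) (hup : ∀ x v, iteratedFDeriv ℝ 2 f x ![v, v] ≤ L * ‖v‖ ^ 2) (x ε : F) :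
    f (x - α • (∇ f x + ε)) ≤ f x - α / 2 * ‖∇ f x‖ ^ 2 + α / 2 * ‖ε‖ ^ 2 := by
  have hquad := le_add_fderiv_add_of_iteratedFDeriv_two_le hf hup x (-(α • (∇ f x + ε)))
  rw [← sub_eq_add_neg, ← inner_gradient_left, inner_neg_right, inner_smul_right, norm_neg,
    norm_smul, Real.norm_of_nonneg hα, mul_pow, inner_add_right,
    real_inner_self_eq_norm_sq] at hquad
  have hstep : α ^ 2 * L ≤ α := by nlinarith
  have hcurv := mul_le_mul_of_nonneg_right hstep (sq_nonneg ‖∇ f x + ε‖)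
  rw [norm_add_sq_real] at hquad hcurv
  linarith

theorem inexact_gradient_step_sub_le (hf : ContDiff ℝ 2 f) {μ L α εg : ℝ} (hμ : 0 < μ)
    (hlow : ∀ x v, μ * ‖v‖ ^ 2 ≤ iteratedFDeriv ℝ 2 f x ![v, v])
    (hup : ∀ x v, iteratedFDeriv ℝ 2 f x ![v, v] ≤ L * ‖v‖ ^ 2) (hα : 0 ≤ α) (hαL : α * L ≤ 1)
    {ε : F} (hε : ‖ε‖ ≤ εg) (x y : F) :
    f (x - α • (∇ f x + ε)) - (f y + εg ^ 2 / (2 * μ)) ≤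
      (1 - α * μ) * (f x - (f y + εg ^ 2 / (2 * μ))) := by
  have hPL := mul_le_mul_of_nonneg_left
    (two_mul_sub_le_norm_gradient_sq hf hμ.le hlow x y) hα
  have hdesc := le_sub_add_of_inexact_gradient_step hf hα hαL hup x ε
  have hnoise := mul_le_mul_of_nonneg_left
    (pow_le_pow_left₀ (norm_nonneg ε) hε 2) hα
  have hradius : α * μ * (εg ^ 2 / (2 * μ)) = α / 2 * εg ^ 2 := by
    field_simp
  linarith

end Gradient

theorem fixed_step_linear_convergence_general
    (n : ℕ) (φ : EuclideanSpace ℝ (Fin n) → ℝ)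
    (μ L : ℝ) (hμ : 0 < μ)
    (hφ : ContDiff ℝ 2 φ)
    (hHessLower : ∀ x v : EuclideanSpace ℝ (Fin n),
      μ * ‖v‖ ^ 2 ≤ (iteratedFDeriv ℝ 2 φ x) ![v, v])
    (hHessUpper : ∀ x v : EuclideanSpace ℝ (Fin n),
      (iteratedFDeriv ℝ 2 φ x) ![v, v] ≤ L * ‖v‖ ^ 2)
    (xstar : EuclideanSpace ℝ (Fin n))
    (e : EuclideanSpace ℝ (Fin n) → EuclideanSpace ℝ (Fin n))
    (εg : ℝ) (he : ∀ x, ‖e x‖ ≤ εg)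
    (α : ℝ) (hα : 0 < α) (hαL : α ≤ 1 / L)
    (x g : ℕ → EuclideanSpace ℝ (Fin n))
    (hg : ∀ k, g k = gradient φ (x k) + e (x k))
    (hx : ∀ k, x (k + 1) = x k - α • g k) :
    ∀ k, φ (x (k + 1)) - (φ xstar + εg ^ 2 / (2 * μ)) ≤
      (1 - α * μ) * (φ (x k) - (φ xstar + εg ^ 2 / (2 * μ))) := by
  have hL : 0 < L := one_div_pos.mp (hα.trans_le hαL)
  have hαL' : α * L ≤ 1 := (le_div_iff₀ hL).mp hαL
  intro k
  rw [hx, hg]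
  exact inexact_gradient_step_sub_le hφ hμ hHessLower hHessUpper hα.le hαL' (he (x k)) (x k) xstar

/-- Fixed-steplength linear convergence to a noise neighborhood (Theorem 4.1). -/
theorem fixed_step_linear_convergence
    (n : ℕ) (φ : EuclideanSpace ℝ (Fin n) → ℝ)
    (μ L : ℝ) (hμ : 0 < μ) (hμL : μ ≤ L)
    (hφ : ContDiff ℝ 2 φ)
    (hHessLower : ∀ x v : EuclideanSpace ℝ (Fin n),
      μ * ‖v‖ ^ 2 ≤ (iteratedFDeriv ℝ 2 φ x) ![v, v])
    (hHessUpper : ∀ x v : EuclideanSpace ℝ (Fin n),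
      (iteratedFDeriv ℝ 2 φ x) ![v, v] ≤ L * ‖v‖ ^ 2)
    (xstar : EuclideanSpace ℝ (Fin n)) (hmin : ∀ x, φ xstar ≤ φ x)
    (e : EuclideanSpace ℝ (Fin n) → EuclideanSpace ℝ (Fin n))
    (εg : ℝ) (hεg : 0 < εg) (he : ∀ x, ‖e x‖ ≤ εg)
    (α : ℝ) (hα : 0 < α) (hαL : α ≤ 1 / L)
    (x g : ℕ → EuclideanSpace ℝ (Fin n))
    (hg : ∀ k, g k = gradient φ (x k) + e (x k))
    (hx : ∀ k, x (k + 1) = x k - α • g k) :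
    ∀ k, φ (x (k + 1)) - (φ xstar + εg ^ 2 / (2 * μ)) ≤
      (1 - α * μ) * (φ (x k) - (φ xstar + εg ^ 2 / (2 * μ))) :=
  fixed_step_linear_convergence_general n φ μ L hμ hφ hHessLower hHessUpper xstar e εg he α hα hαL x
    g hg hx
end

section
/- Let φ be L-smooth, f = φ + ε with |ε| ≤ ε̄_f, g = ∇φ(x) + e with ‖e‖ > β‖∇φ(x)‖ for some β ∈ (0,1) and ‖e‖ ≤ ε̄_g, and suppose x₊ = x − α g satisfies the relaxed Armijo condition f(x₊) ≤ f(x) − c₁α‖g‖² + 2ε_A with c₁, α > 0. Then φ(x₊) ≤ φ(x) − (c₁τ(1−β)²/L)‖∇φ(x)‖² + η, where η = (c₁τ(1−β)²/(Lβ²)) ε̄_g² + 2ε_A + 2ε̄_f and τ ∈ (0,1) is arbitrary. -/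
/-- Case 2 of the line search analysis: progress bound when the relative
gradient error exceeds β. -/
theorem line_search_case_two
    (n : ℕ) (φ f : EuclideanSpace ℝ (Fin n) → ℝ)
    (ε : EuclideanSpace ℝ (Fin n) → ℝ)
    (L εf : ℝ) (hL : 0 < L) (hεf : 0 < εf)
    (hdiff : Differentiable ℝ φ)
    (hLip : LipschitzWith (Real.toNNReal L) (gradient φ))
    (hf : ∀ y, f y = φ y + ε y) (hε : ∀ y, |ε y| ≤ εf)
    (x g e xplus : EuclideanSpace ℝ (Fin n))
    (hg : g = gradient φ x + e)
    (β εg : ℝ) (hβ0 : 0 < β) (hβ1 : β < 1)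
    (hrel : ‖e‖ > β * ‖gradient φ x‖) (heg : ‖e‖ ≤ εg)
    (c₁ α εA τ : ℝ) (hc₁ : 0 < c₁) (hα : 0 < α)
    (hτ0 : 0 < τ) (hτ1 : τ < 1)
    (hxplus : xplus = x - α • g)
    (hArmijo : f xplus ≤ f x - c₁ * α * ‖g‖ ^ 2 + 2 * εA) :
    φ xplus ≤ φ x - c₁ * τ * (1 - β) ^ 2 / L * ‖gradient φ x‖ ^ 2 +
      (c₁ * τ * (1 - β) ^ 2 / (L * β ^ 2) * εg ^ 2 + 2 * εA + 2 * εf) := by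
  have hε1 := hε x
  have hε2 := hε xplus
  have h1 : |ε x| ≤ εf := hε x
  have h2 : |ε xplus| ≤ εf := hε xplus
  rw [abs_le] at h1 h2
  have hgn : (0:ℝ) ≤ ‖g‖ ^ 2 := sq_nonneg _
  have hstep : φ xplus ≤ φ x + 2 * εA + 2 * εf := by
    have := hArmijo
    rw [hf xplus, hf x] at this
    nlinarith [mul_nonneg (mul_nonneg hc₁.le hα.le) hgn]
  have hGnn : (0:ℝ) ≤ ‖gradient φ x‖ := norm_nonneg _
  have hGb : β * ‖gradient φ x‖ ≤ εg := le_trans hrel.le heg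
  have hεg0 : (0:ℝ) ≤ εg := le_trans (norm_nonneg e) heg
  have hC : (0:ℝ) ≤ c₁ * τ * (1 - β) ^ 2 / L :=
    div_nonneg (mul_nonneg (mul_nonneg hc₁.le hτ0.le) (sq_nonneg _)) hL.le
  have hkey : c₁ * τ * (1 - β) ^ 2 / L * ‖gradient φ x‖ ^ 2 ≤
      c₁ * τ * (1 - β) ^ 2 / (L * β ^ 2) * εg ^ 2 := by
    have hβ2 : (0:ℝ) < β ^ 2 := pow_pos hβ0 2
    have hsq : (β * ‖gradient φ x‖) ^ 2 ≤ εg ^ 2 :=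
      pow_le_pow_left₀ (mul_nonneg hβ0.le hGnn) hGb 2
    rw [div_mul_eq_mul_div, div_mul_eq_mul_div, div_le_div_iff₀ hL (by positivity)]
    have hm := mul_le_mul_of_nonneg_left hsq
      (by positivity : (0:ℝ) ≤ c₁ * τ * (1 - β) ^ 2 * L)
    nlinarith [hm]
  linarith
end
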